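/- arXiv:1107.2575 — 6 statements merged into one kernel-verified Lean document; each statement's English description precedes it below -/
import Mathlib

section
/- Let 0 < α < 1 and let a be a real number. Then the function y : (0,∞) → ℝ defined by y(t) = Σ_{k=0}^∞ a^k t^{αk} / Γ(αk + 1) is differentiable at every t > 0, and its derivative is given by the term-wise differentiated series: y′(t) = Σ_{k=1}^∞ a^k · (αk) · t^{αk−1} / Γ(αk + 1). -/
/-!
Each term `a^k t^(αk) / Γ(αk+1)` is differentiable for `t > 0`, so the series can be
differentiated term by term on `(t/2, 2t)` once the derivatives are dominated there by a summable
sequence. They are bounded by a multiple of `z^k / Γ(αk+1)` with `z = 2|a|(2t)^α`, and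
`∑ z^k / Γ(αk+1)` converges for every `z` by the ratio test, since log-convexity of `Γ` gives
`Γ(x) / Γ(x+α) ≤ (x+α)^(1-α) / x → 0`.
-/

open Filter Topology

namespace Real

theorem Gamma_div_Gamma_add_le {α x : ℝ} (hα0 : 0 < α) (hα1 : α < 1) (hx : 0 < x) :
    Gamma x / Gamma (x + α) ≤ (x + α) ^ (1 - α) / x := by
  have hxα : 0 < x + α := by linarith
  have hΓ : 0 < Gamma (x + α) := Gamma_pos_of_pos hxα
  -- Hölder's inequality for `Γ` at `x + 1 = α (x + α) + (1 - α) (x + α + 1)`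
  have h := Gamma_mul_add_mul_le_rpow_Gamma_mul_rpow_Gamma hxα (by linarith : 0 < x + α + 1)
    hα0 (sub_pos.2 hα1) (add_sub_cancel α 1)
  rw [show α * (x + α) + (1 - α) * (x + α + 1) = x + 1 by ring, Gamma_add_one hx.ne',
    Gamma_add_one hxα.ne', mul_rpow hxα.le hΓ.le, mul_left_comm, ← rpow_add hΓ,
    add_sub_cancel, rpow_one] at h
  rw [div_le_div_iff₀ hΓ hx]
  linarith

theorem tendsto_Gamma_div_Gamma_add_atTop {α : ℝ} (hα0 : 0 < α) (hα1 : α < 1) :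
    Tendsto (fun x => Gamma x / Gamma (x + α)) atTop (𝓝 0) := by
  have hbound : Tendsto (fun x => (x + α) ^ (1 - α) / x) atTop (𝓝 0) := by
    have h1 : Tendsto (fun x : ℝ => 1 + α * x⁻¹) atTop (𝓝 1) := by
      simpa using (tendsto_inv_atTop_zero.const_mul α).const_add 1
    have h2 : Tendsto (fun x : ℝ => (x + α) ^ (-α)) atTop (𝓝 0) :=
      (tendsto_rpow_neg_atTop hα0).comp (tendsto_atTop_add_const_right _ α tendsto_id)
    refine Tendsto.congr' ?_ (by simpa using h1.mul h2)
    filter_upwards [eventually_gt_atTop 0] with x hx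
    have hxα : 0 < x + α := by linarith
    rw [sub_eq_add_neg, rpow_add hxα, rpow_one]
    field_simp
  refine tendsto_of_tendsto_of_tendsto_of_le_of_le' tendsto_const_nhds hbound ?_ ?_
  · filter_upwards [eventually_gt_atTop 0] with x hx
    exact div_nonneg (Gamma_pos_of_pos hx).le (Gamma_pos_of_pos (by linarith)).le
  · filter_upwards [eventually_gt_atTop 0] with x hx using Gamma_div_Gamma_add_le hα0 hα1 hx

theorem summable_pow_div_Gamma_mul_add_one {α : ℝ} (hα0 : 0 < α) (hα1 : α < 1) (z : ℝ) :
    Summable fun n : ℕ => z ^ n / Gamma (α * n + 1) := by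
  have hratio : Tendsto (fun n : ℕ => |z| * (Gamma (α * n + 1) / Gamma (α * n + 1 + α)))
      atTop (𝓝 0) := by
    simpa using ((tendsto_Gamma_div_Gamma_add_atTop hα0 hα1).comp
      (tendsto_atTop_add_const_right _ 1
        (tendsto_natCast_atTop_atTop.const_mul_atTop hα0))).const_mul |z|
  refine summable_of_ratio_norm_eventually_le (r := 1 / 2) (by norm_num) ?_
  filter_upwards [hratio.eventually (gt_mem_nhds (by norm_num : (0 : ℝ) < 1 / 2))] with n hn
  have hΓ : 0 < Gamma (α * n + 1) := Gamma_pos_of_pos (by positivity)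
  have hΓ' : 0 < Gamma (α * n + 1 + α) := Gamma_pos_of_pos (by positivity)
  calc ‖z ^ (n + 1) / Gamma (α * ↑(n + 1) + 1)‖
      = |z| * (Gamma (α * n + 1) / Gamma (α * n + 1 + α)) *
          ‖z ^ n / Gamma (α * n + 1)‖ := by
        rw [Nat.cast_succ, show α * (n + 1 : ℝ) + 1 = α * n + 1 + α by ring]
        simp only [norm_div, norm_pow, Real.norm_eq_abs, abs_of_pos hΓ, abs_of_pos hΓ']
        field_simp
        ring
    _ ≤ 1 / 2 * ‖z ^ n / Gamma (α * n + 1)‖ := by gcongr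

theorem hasDerivAt_pow_mul_rpow_mul_div_Gamma (α a : ℝ) (n : ℕ) {y : ℝ} (hy : 0 < y) :
    HasDerivAt (fun x => a ^ n * x ^ (α * n) / Gamma (α * n + 1))
      (a ^ n * (α * n) * y ^ (α * n - 1) / Gamma (α * n + 1)) y := by
  rw [mul_assoc (a ^ n)]
  exact ((hasDerivAt_rpow_const (Or.inl hy.ne')).const_mul (a ^ n)).div_const _

theorem norm_pow_mul_mul_rpow_sub_one_div_Gamma_le {α a c C y : ℝ} (hα : 0 < α) (hc : 0 < c)
    (hcy : c ≤ y) (hyC : y ≤ C) (n : ℕ) :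
    ‖a ^ n * (α * n) * y ^ (α * n - 1) / Gamma (α * n + 1)‖
      ≤ α / c * ((2 * |a| * C ^ α) ^ n / Gamma (α * n + 1)) := by
  have hy : 0 < y := hc.trans_le hcy
  have hΓ : 0 < Gamma (α * n + 1) := Gamma_pos_of_pos (by positivity)
  have hC : 0 < C := hy.trans_le hyC
  have hrpow : y ^ (α * n - 1) ≤ (C ^ α) ^ n / c := by
    rw [rpow_sub hy, rpow_one, ← rpow_mul_natCast (hy.le.trans hyC)]
    gcongr
  have hn : (n : ℝ) ≤ 2 ^ n := mod_cast n.lt_two_pow_self.le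
  simp only [norm_div, norm_mul, norm_pow, Real.norm_eq_abs, abs_of_pos hΓ, abs_of_pos hα,
    Nat.abs_cast, abs_of_pos (rpow_pos_of_pos hy _)]
  rw [mul_div_assoc', div_le_div_iff_of_pos_right hΓ]
  calc |a| ^ n * (α * n) * y ^ (α * n - 1)
      ≤ |a| ^ n * (α * 2 ^ n) * ((C ^ α) ^ n / c) := by gcongr
    _ = α / c * (2 * |a| * C ^ α) ^ n := by rw [mul_pow, mul_pow]; ring

end Real

/-- For `0 < α < 1` and `a : ℝ`, the function `y(t) = ∑ a^k t^(αk)/Γ(αk+1)`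
(`= E_{α,1}(a t^α)`) is differentiable at every `t > 0`, with derivative given by the
term-wise differentiated series `∑_{k=1}^∞ a^k (αk) t^(αk-1)/Γ(αk+1)`. -/
theorem mittagLeffler_hasDerivAt (α a : ℝ) (hα0 : 0 < α) (hα1 : α < 1)
    (t : ℝ) (ht : 0 < t) :
    HasDerivAt (fun t' : ℝ => ∑' k : ℕ, a ^ k * t' ^ (α * k) / Real.Gamma (α * k + 1))
      (∑' k : ℕ, a ^ (k + 1) * (α * ((k : ℝ) + 1)) * t ^ (α * ((k : ℝ) + 1) - 1) /
        Real.Gamma (α * ((k : ℝ) + 1) + 1)) t := by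
  have hmem : t ∈ Set.Ioo (t / 2) (2 * t) := ⟨by linarith, by linarith⟩
  have hdom (n : ℕ) {y : ℝ} (hy : y ∈ Set.Ioo (t / 2) (2 * t)) :=
    Real.norm_pow_mul_mul_rpow_sub_one_div_Gamma_le (a := a) hα0 (by positivity) hy.1.le hy.2.le n
  have hdom_summable :=
    (Real.summable_pow_div_Gamma_mul_add_one hα0 hα1 (2 * |a| * (2 * t) ^ α)).mul_left
      (α / (t / 2))
  have hconv : Summable fun n : ℕ => a ^ n * t ^ (α * n) / Real.Gamma (α * n + 1) := by
    simpa only [Real.rpow_mul_natCast ht.le, mul_pow] using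
      Real.summable_pow_div_Gamma_mul_add_one hα0 hα1 (a * t ^ α)
  have hderiv := hasDerivAt_tsum_of_isPreconnected hdom_summable isOpen_Ioo isPreconnected_Ioo
    (fun n y hy => Real.hasDerivAt_pow_mul_rpow_mul_div_Gamma α a n (by linarith [hy.1]))
    (fun n _ hy => hdom n hy) hmem hconv hmem
  rw [(hdom_summable.of_norm_bounded fun n => hdom n hmem).tsum_eq_zero_add] at hderiv
  simpa using hderiv
end

section
/- Let 0 < α < 1, let a and y₀ be real numbers, and define y : [0,∞) → ℝ by y(t) = y₀ Σ_{k=0}^∞ a^k t^{αk} / Γ(αk + 1) for t > 0 and y(0) = y₀. Then y is continuous at 0 from the right, and for every t > 0 the Caputo fractional derivative of order α of y satisfies (1/Γ(1−α)) ∫_0^t y′(τ) (t−τ)^{−α} dτ = a · y(t). In other words, y(t) = y₀ E_{α,1}(a t^α) solves the initial value problem ᶜD^α y − a y = 0, y(0) = y₀. -/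
/-!
Write `y = y₀ ∑ₖ uₖ` with `uₖ(t) = aᵏ t^(αk) / Γ(αk + 1)`. For `p > 0` the Beta integral
`∫₀ᵗ τ^(p-1) (t-τ)^(-α) dτ = t^(p-α) Γ(p) Γ(1-α) / Γ(p+1-α)` shows that the Caputo derivative maps
`u_{k+1}` to `a uₖ`, while `u₀` is constant; so differentiating and integrating termwise gives
`ᶜD^α y = a y`. Both interchanges are justified by comparison with the same series for `|a|`, which
converge because `Γ(αn + 1) ≥ ⌊αn⌋!` eventually dominates every geometric sequence. Continuity at
`0` follows from locally uniform convergence, all terms but `u₀` vanishing at `0`.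
-/

open MeasureTheory intervalIntegral Filter Set
open scoped Nat

lemma factorial_floor_le_Gamma_add_one {x : ℝ} (hx : 1 ≤ x) :
    (⌊x⌋₊ ! : ℝ) ≤ Real.Gamma (x + 1) := by
  have hfloor : (1 : ℝ) ≤ ⌊x⌋₊ := by exact_mod_cast (Nat.one_le_floor_iff x).2 hx
  rw [← Real.Gamma_nat_eq_factorial]
  exact Real.Gamma_strictMonoOn_Ici.monotoneOn (mem_Ici.2 (by linarith))
    (mem_Ici.2 (by linarith))
    (by linarith [Nat.floor_le (zero_le_one.trans hx)])

lemma eventually_pow_le_Gamma_mul_add_one {α : ℝ} (hα : 0 < α) (B : ℝ) :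
    ∀ᶠ n : ℕ in atTop, B ^ n ≤ Real.Gamma (α * n + 1) := by
  set M := max |B| 1
  set E := M ^ α⁻¹
  have hM : 1 ≤ M := le_max_right _ _
  have hE : 1 ≤ E := Real.one_le_rpow hM (inv_nonneg.2 hα.le)
  have hfloor : Tendsto (fun n : ℕ => ⌊α * n⌋₊) atTop atTop :=
    tendsto_nat_floor_atTop.comp (tendsto_natCast_atTop_atTop.const_mul_atTop hα)
  filter_upwards [hfloor.eventually (FloorSemiring.eventually_mul_pow_lt_factorial_sub E E 0),
    hfloor.eventually_ge_atTop 1] with n hfact hm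
  calc B ^ n ≤ M ^ n := (le_abs_self _).trans <| by
        rw [abs_pow]; exact pow_le_pow_left₀ (abs_nonneg B) (le_max_left _ _) n
    _ = E ^ (α * n) := by
        rw [Real.rpow_mul (by positivity), Real.rpow_inv_rpow (by positivity) hα.ne',
          Real.rpow_natCast]
    _ ≤ E ^ (⌊α * n⌋₊ + 1 : ℕ) := by
        rw [← Real.rpow_natCast]
        exact Real.rpow_le_rpow_of_exponent_le hE (by push_cast; exact (Nat.lt_floor_add_one _).le)
    _ = E * E ^ ⌊α * n⌋₊ := pow_succ' _ _
    _ ≤ (⌊α * n⌋₊ ! : ℝ) := by simpa using hfact.le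
    _ ≤ Real.Gamma (α * n + 1) :=
        factorial_floor_le_Gamma_add_one ((Nat.one_le_floor_iff _).1 hm)

lemma summable_pow_div_Gamma_mul_add_one {α : ℝ} (hα : 0 < α) (C : ℝ) :
    Summable fun n : ℕ => C ^ n / Real.Gamma (α * n + 1) := by
  refine .of_norm_bounded_eventually_nat summable_geometric_two ?_
  filter_upwards [eventually_pow_le_Gamma_mul_add_one hα (2 * |C|)] with n hn
  have hΓ : 0 < Real.Gamma (α * n + 1) := Real.Gamma_pos_of_pos (by positivity)
  rw [norm_div, norm_pow, Real.norm_of_nonneg hΓ.le, div_le_iff₀ hΓ, Real.norm_eq_abs]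
  calc |C| ^ n = (1 / 2) ^ n * (2 * |C|) ^ n := by rw [← mul_pow]; ring
    _ ≤ (1 / 2) ^ n * Real.Gamma (α * n + 1) := by gcongr

lemma summable_natCast_mul_pow_div_Gamma_mul_add_one {α : ℝ} (hα : 0 < α) (C : ℝ) :
    Summable fun n : ℕ => n * C ^ n / Real.Gamma (α * n + 1) := by
  refine (summable_pow_div_Gamma_mul_add_one hα (2 * |C|)).of_norm_bounded fun n => ?_
  have hΓ : 0 < Real.Gamma (α * n + 1) := Real.Gamma_pos_of_pos (by positivity)
  rw [norm_div, Real.norm_of_nonneg hΓ.le, norm_mul, norm_pow, Real.norm_natCast,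
    Real.norm_eq_abs, mul_pow]
  gcongr
  exact_mod_cast (Nat.lt_two_pow_self).le

lemma intervalIntegrable_rpow_mul_sub_rpow {p q t : ℝ} (hp : 0 < p) (hq : 0 < q) (ht : 0 < t) :
    IntervalIntegrable (fun τ => τ ^ (p - 1) * (t - τ) ^ (q - 1)) volume 0 t := by
  have hleft : IntervalIntegrable (fun τ : ℝ => τ ^ (p - 1)) volume 0 (t / 2) :=
    intervalIntegral.intervalIntegrable_rpow' (by linarith)
  have hright : IntervalIntegrable (fun τ => (t - τ) ^ (q - 1)) volume (t / 2) t := by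
    simpa [sub_half] using
      (intervalIntegral.intervalIntegrable_rpow' (r := q - 1) (a := t / 2) (b := 0)
        (by linarith)).comp_sub_left t
  refine (hleft.mul_continuousOn ?_).trans (hright.continuousOn_mul ?_)
  · refine (continuousOn_const.sub continuousOn_id).rpow_const fun τ hτ => Or.inl ?_
    rw [uIcc_of_le (by positivity)] at hτ
    exact (by linarith [hτ.2] : (0 : ℝ) < t - τ).ne'
  · refine continuousOn_id.rpow_const fun τ hτ => Or.inl ?_
    rw [uIcc_of_le (by linarith)] at hτ
    exact (by linarith [hτ.1] : (0 : ℝ) < τ).ne'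

lemma integral_rpow_mul_sub_rpow {p q t : ℝ} (hp : 0 < p) (hq : 0 < q) (ht : 0 < t) :
    ∫ τ in 0..t, τ ^ (p - 1) * (t - τ) ^ (q - 1)
      = t ^ (p + q - 1) * (Real.Gamma p * Real.Gamma q / Real.Gamma (p + q)) := by
  have h := Complex.betaIntegral_scaled p q ht
  rw [Complex.betaIntegral_eq_Gamma_mul_div _ _ (by simpa) (by simpa)] at h
  apply Complex.ofReal_injective
  rw [← intervalIntegral.integral_ofReal]
  convert h using 1
  · refine intervalIntegral.integral_congr fun τ hτ => ?_
    rw [uIcc_of_le ht.le] at hτ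
    rw [Complex.ofReal_mul, Complex.ofReal_cpow hτ.1, Complex.ofReal_cpow (by linarith [hτ.2])]
    push_cast; rfl
  · rw [Complex.ofReal_mul, Complex.ofReal_cpow ht.le, Complex.ofReal_div, Complex.ofReal_mul,
      ← Complex.Gamma_ofReal, ← Complex.Gamma_ofReal, ← Complex.Gamma_ofReal]
    push_cast; rfl

noncomputable def mittagLefflerTerm (α a : ℝ) (k : ℕ) (t : ℝ) : ℝ :=
  a ^ k * t ^ (α * k) / Real.Gamma (α * k + 1)

noncomputable def mittagLefflerTermDeriv (α a : ℝ) (k : ℕ) (t : ℝ) : ℝ :=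
  α * k * a ^ k * t ^ (α * k - 1) / Real.Gamma (α * k + 1)

section MittagLefflerTerm

variable {α : ℝ} (a : ℝ) (k : ℕ)

lemma mittagLefflerTerm_eq_pow_div {t : ℝ} (ht : 0 ≤ t) :
    mittagLefflerTerm α a k t = (a * t ^ α) ^ k / Real.Gamma (α * k + 1) := by
  rw [mittagLefflerTerm, Real.rpow_mul ht, Real.rpow_natCast, mul_pow]

lemma abs_mittagLefflerTerm (hα : 0 ≤ α) {t : ℝ} (ht : 0 ≤ t) :
    |mittagLefflerTerm α a k t| = mittagLefflerTerm α |a| k t := by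
  have hΓ : 0 < Real.Gamma (α * k + 1) := Real.Gamma_pos_of_pos (by positivity)
  rw [mittagLefflerTerm, mittagLefflerTerm, abs_div, abs_mul, abs_pow, abs_of_pos hΓ,
    abs_of_nonneg (Real.rpow_nonneg ht _)]

lemma abs_mittagLefflerTermDeriv (hα : 0 ≤ α) {t : ℝ} (ht : 0 ≤ t) :
    |mittagLefflerTermDeriv α a k t| = mittagLefflerTermDeriv α |a| k t := by
  have hΓ : 0 < Real.Gamma (α * k + 1) := Real.Gamma_pos_of_pos (by positivity)
  rw [mittagLefflerTermDeriv, mittagLefflerTermDeriv, abs_div, abs_mul, abs_mul, abs_pow,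
    abs_of_pos hΓ, abs_of_nonneg (Real.rpow_nonneg ht _), abs_of_nonneg (by positivity)]

lemma mittagLefflerTerm_monotoneOn (hα : 0 ≤ α) (ha : 0 ≤ a) :
    MonotoneOn (mittagLefflerTerm α a k) (Ici 0) := fun s hs t _ hst => by
  unfold mittagLefflerTerm
  gcongr

lemma mittagLefflerTermDeriv_eq {t : ℝ} (ht : 0 < t) :
    mittagLefflerTermDeriv α a k t = α * k * t⁻¹ * mittagLefflerTerm α a k t := by
  rw [mittagLefflerTermDeriv, mittagLefflerTerm, Real.rpow_sub_one ht.ne']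
  ring

lemma continuous_mittagLefflerTerm (hα : 0 ≤ α) : Continuous (mittagLefflerTerm α a k) :=
  (continuous_const.mul (Real.continuous_rpow_const (by positivity))).div_const _

lemma hasDerivAt_mittagLefflerTerm {t : ℝ} (ht : 0 < t) :
    HasDerivAt (mittagLefflerTerm α a k) (mittagLefflerTermDeriv α a k t) t := by
  refine (((Real.hasDerivAt_rpow_const (Or.inl ht.ne')).const_mul (a ^ k)).div_const
    (Real.Gamma (α * k + 1))).congr_deriv ?_
  unfold mittagLefflerTermDeriv
  ring

end MittagLefflerTerm

section MittagLefflerSeries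

variable {α : ℝ} (a : ℝ)

lemma summable_mittagLefflerTerm (hα : 0 < α) {t : ℝ} (ht : 0 ≤ t) :
    Summable fun k => mittagLefflerTerm α a k t := by
  simpa only [mittagLefflerTerm_eq_pow_div a _ ht] using
    summable_pow_div_Gamma_mul_add_one hα (a * t ^ α)

lemma tsum_mittagLefflerTerm_zero (hα : α ≠ 0) : ∑' k, mittagLefflerTerm α a k 0 = 1 := by
  rw [tsum_eq_single 0 fun k hk => ?_]
  · simp [mittagLefflerTerm]
  · simp [mittagLefflerTerm, Real.zero_rpow (mul_ne_zero hα (Nat.cast_ne_zero.2 hk))]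

lemma continuousOn_tsum_mittagLefflerTerm (hα : 0 < α) :
    ContinuousOn (fun t => ∑' k, mittagLefflerTerm α a k t) (Ici 0) := by
  intro x hx
  have hx1 : x + 1 ∈ Ici 0 := mem_Ici.2 (by linarith [mem_Ici.1 hx])
  have hbound : ∀ k, ∀ t ∈ Icc 0 (x + 1),
      ‖mittagLefflerTerm α a k t‖ ≤ mittagLefflerTerm α |a| k (x + 1) := fun k t ht => by
    rw [Real.norm_eq_abs, abs_mittagLefflerTerm a k hα.le ht.1]
    exact mittagLefflerTerm_monotoneOn |a| k hα.le (abs_nonneg a) ht.1 hx1 ht.2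
  have hcont : ContinuousOn (fun t => ∑' k, mittagLefflerTerm α a k t) (Icc 0 (x + 1)) :=
    continuousOn_tsum (fun k => (continuous_mittagLefflerTerm a k hα.le).continuousOn)
      (summable_mittagLefflerTerm |a| hα hx1) hbound
  exact (hcont x ⟨hx, by linarith⟩).mono_of_mem_nhdsWithin
    (inter_mem_nhdsWithin _ (Iic_mem_nhds (by linarith)))

lemma hasDerivAt_tsum_mittagLefflerTerm (hα : 0 < α) {τ : ℝ} (hτ : 0 < τ) :
    HasDerivAt (fun s => ∑' k, mittagLefflerTerm α a k s)
      (∑' k, mittagLefflerTermDeriv α a k τ) τ := by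
  set C := |a| * (τ + 1) ^ α
  have hu : Summable fun k : ℕ => 2 / τ * α * (k * C ^ k / Real.Gamma (α * k + 1)) :=
    (summable_natCast_mul_pow_div_Gamma_mul_add_one hα C).mul_left _
  have hτI : τ ∈ Ioo (τ / 2) (τ + 1) := ⟨by linarith, by linarith⟩
  refine hasDerivAt_tsum_of_isPreconnected hu isOpen_Ioo isPreconnected_Ioo
    (fun k σ hσ => hasDerivAt_mittagLefflerTerm a k (by linarith [hσ.1]))
    (fun k σ hσI => ?_) hτI (summable_mittagLefflerTerm a hα hτ.le) hτI
  have hσ : 0 < σ := by linarith [hσI.1]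
  have hσinv : σ⁻¹ ≤ 2 / τ := by rw [inv_le_comm₀ hσ (by positivity), inv_div]; linarith [hσI.1]
  have hterm : |mittagLefflerTerm α a k σ| ≤ C ^ k / Real.Gamma (α * k + 1) := by
    rw [abs_mittagLefflerTerm a k hα.le hσ.le, ← mittagLefflerTerm_eq_pow_div |a| k (by linarith)]
    exact mittagLefflerTerm_monotoneOn |a| k hα.le (abs_nonneg a) hσ.le
      (mem_Ici.2 (by linarith)) hσI.2.le
  rw [mittagLefflerTermDeriv_eq a k hσ, Real.norm_eq_abs, abs_mul, abs_mul, abs_mul,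
    abs_of_pos hα, Nat.abs_cast, abs_inv, abs_of_pos hσ]
  calc α * k * σ⁻¹ * |mittagLefflerTerm α a k σ|
      ≤ α * k * (2 / τ) * (C ^ k / Real.Gamma (α * k + 1)) := by gcongr
    _ = 2 / τ * α * (k * C ^ k / Real.Gamma (α * k + 1)) := by ring

end MittagLefflerSeries

section Caputo

variable {α : ℝ} (a : ℝ) {t : ℝ}

lemma intervalIntegrable_mittagLefflerTermDeriv_mul (k : ℕ) (hα0 : 0 < α) (hα1 : α < 1)
    (ht : 0 < t) :
    IntervalIntegrable (fun τ => mittagLefflerTermDeriv α a k τ * (t - τ) ^ (-α)) volume 0 t := by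
  rcases k.eq_zero_or_pos with rfl | hk
  · simp [mittagLefflerTermDeriv]
  have h := (intervalIntegrable_rpow_mul_sub_rpow (p := α * k) (q := 1 - α) (by positivity)
    (by linarith) ht).const_mul (α * k * a ^ k / Real.Gamma (α * k + 1))
  refine h.congr fun τ _ => ?_
  simp only [mittagLefflerTermDeriv, sub_sub_cancel_left]
  ring

lemma integral_mittagLefflerTermDeriv_succ_mul (k : ℕ) (hα0 : 0 < α) (hα1 : α < 1)
    (ht : 0 < t) :
    ∫ τ in 0..t, mittagLefflerTermDeriv α a (k + 1) τ * (t - τ) ^ (-α)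
      = Real.Gamma (1 - α) * a * mittagLefflerTerm α a k t := by
  set p := α * (k + 1 : ℕ)
  have hp : 0 < p := by positivity
  have hbeta := integral_rpow_mul_sub_rpow hp (sub_pos.2 hα1) ht
  rw [sub_sub_cancel_left, show p + (1 - α) - 1 = α * k by push_cast [p]; ring,
    show p + (1 - α) = α * k + 1 by push_cast [p]; ring] at hbeta
  have hΓ : Real.Gamma (p + 1) = p * Real.Gamma p := Real.Gamma_add_one hp.ne'
  have hΓp : 0 < Real.Gamma p := Real.Gamma_pos_of_pos hp
  have hΓk : 0 < Real.Gamma (α * k + 1) := Real.Gamma_pos_of_pos (by positivity)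
  calc ∫ τ in 0..t, mittagLefflerTermDeriv α a (k + 1) τ * (t - τ) ^ (-α)
      = p * a ^ (k + 1) / Real.Gamma (p + 1) * ∫ τ in 0..t, τ ^ (p - 1) * (t - τ) ^ (-α) := by
        rw [← intervalIntegral.integral_const_mul]
        congr 1 with τ
        simp only [mittagLefflerTermDeriv, p]
        ring
    _ = Real.Gamma (1 - α) * a * mittagLefflerTerm α a k t := by
        rw [hbeta, hΓ, mittagLefflerTerm]
        field_simp
        ring

lemma norm_mittagLefflerTermDeriv_mul (k : ℕ) (hα : 0 ≤ α) {τ : ℝ} (hτ : τ ∈ Ioc 0 t) :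
    ‖mittagLefflerTermDeriv α a k τ * (t - τ) ^ (-α)‖
      = mittagLefflerTermDeriv α |a| k τ * (t - τ) ^ (-α) := by
  rw [norm_mul, Real.norm_eq_abs, abs_mittagLefflerTermDeriv a k hα hτ.1.le, Real.norm_eq_abs,
    abs_of_nonneg (Real.rpow_nonneg (sub_nonneg.2 hτ.2) _)]

lemma integral_tsum_mittagLefflerTermDeriv_mul (hα0 : 0 < α) (hα1 : α < 1) (ht : 0 < t) :
    ∫ τ in 0..t, (∑' k, mittagLefflerTermDeriv α a k τ) * (t - τ) ^ (-α)
      = Real.Gamma (1 - α) * a * ∑' k, mittagLefflerTerm α a k t := by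
  set F : ℕ → ℝ → ℝ := fun k τ => mittagLefflerTermDeriv α a k τ * (t - τ) ^ (-α)
  have hF_int : ∀ k, Integrable (F k) (volume.restrict (Ioc 0 t)) := fun k =>
    (intervalIntegrable_iff_integrableOn_Ioc_of_le ht.le).1
      (intervalIntegrable_mittagLefflerTermDeriv_mul a k hα0 hα1 ht)
  have hF_norm : ∀ k, ∫ τ in Ioc 0 t, ‖F k τ‖
      = ∫ τ in 0..t, mittagLefflerTermDeriv α |a| k τ * (t - τ) ^ (-α) := fun k => by
    rw [intervalIntegral.integral_of_le ht.le]
    exact setIntegral_congr_fun measurableSet_Ioc fun τ hτ =>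
      norm_mittagLefflerTermDeriv_mul a k hα0.le hτ
  have hF_sum : Summable fun k => ∫ τ in Ioc 0 t, ‖F k τ‖ := by
    refine (summable_nat_add_iff 1).1 ?_
    simp only [hF_norm, integral_mittagLefflerTermDeriv_succ_mul _ _ hα0 hα1 ht]
    exact (summable_mittagLefflerTerm |a| hα0 ht.le).mul_left _
  have hF_zero : ∫ τ in Ioc 0 t, F 0 τ = 0 := by simp [F, mittagLefflerTermDeriv]
  calc ∫ τ in 0..t, (∑' k, mittagLefflerTermDeriv α a k τ) * (t - τ) ^ (-α)
      = ∫ τ in Ioc 0 t, ∑' k, F k τ := by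
        simp only [intervalIntegral.integral_of_le ht.le, F, tsum_mul_right]
    _ = ∑' k, ∫ τ in Ioc 0 t, F k τ :=
        (integral_tsum_of_summable_integral_norm hF_int hF_sum).symm
    _ = ∑' k, ∫ τ in Ioc 0 t, F (k + 1) τ := by
        rw [(hasSum_integral_of_summable_integral_norm hF_int hF_sum).summable.tsum_eq_zero_add,
          hF_zero, zero_add]
    _ = Real.Gamma (1 - α) * a * ∑' k, mittagLefflerTerm α a k t := by
        simp only [F, ← intervalIntegral.integral_of_le ht.le,
          integral_mittagLefflerTermDeriv_succ_mul _ _ hα0 hα1 ht, tsum_mul_left]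

end Caputo

/-- For `0 < α < 1`, the function `y(t) = y₀ E_{α,1}(a t^α)` (with `y(0) = y₀`) is
continuous at `0` from the right and solves the Caputo initial-value problem
`ᶜD^α y - a y = 0`, `y(0) = y₀`: for every `t > 0`,
`(1/Γ(1-α)) ∫_0^t y'(τ) (t-τ)^(-α) dτ = a y(t)`. -/
theorem mittagLeffler_solves_caputo_ivp (α a y₀ : ℝ) (hα0 : 0 < α) (hα1 : α < 1)
    (y : ℝ → ℝ)
    (hy : ∀ t : ℝ, 0 < t →
      y t = y₀ * ∑' k : ℕ, a ^ k * t ^ (α * k) / Real.Gamma (α * k + 1))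
    (hy0 : y 0 = y₀) :
    ContinuousWithinAt y (Set.Ici 0) 0 ∧
    ∀ t : ℝ, 0 < t →
      (1 / Real.Gamma (1 - α)) *
          ∫ τ in (0 : ℝ)..t, deriv y τ * (t - τ) ^ (-α) = a * y t := by
  have hy' : ∀ t, 0 < t → y t = y₀ * ∑' k, mittagLefflerTerm α a k t := hy
  refine ⟨?_, fun t ht => ?_⟩
  · have hyIci : EqOn y (fun t => y₀ * ∑' k, mittagLefflerTerm α a k t) (Ici 0) := fun t ht =>
      ht.eq_or_lt.elim (fun h => by simp [← h, hy0, tsum_mittagLefflerTerm_zero a hα0.ne'])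
        (hy' t)
    exact (continuousOn_const.mul (continuousOn_tsum_mittagLefflerTerm a hα0) 0 self_mem_Ici).congr
      hyIci (hyIci self_mem_Ici)
  · have hderiv : EqOn (deriv y) (fun τ => y₀ * ∑' k, mittagLefflerTermDeriv α a k τ)
        (Ioo 0 t) := fun τ hτ =>
      (((hasDerivAt_tsum_mittagLefflerTerm a hα0 hτ.1).const_mul y₀).congr_of_eventuallyEq
        ((eventually_gt_nhds hτ.1).mono hy')).deriv
    have hintegrand : EqOn (fun τ => deriv y τ * (t - τ) ^ (-α))
        (fun τ => y₀ * ((∑' k, mittagLefflerTermDeriv α a k τ) * (t - τ) ^ (-α))) (uIoo 0 t) := by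
      rw [uIoo_of_le ht.le]
      intro τ hτ
      simp only [hderiv hτ, mul_assoc]
    have hΓ : Real.Gamma (1 - α) ≠ 0 := (Real.Gamma_pos_of_pos (sub_pos.2 hα1)).ne'
    rw [integral_congr_uIoo hintegrand, intervalIntegral.integral_const_mul,
      integral_tsum_mittagLefflerTermDeriv_mul a hα0 hα1 ht, hy' t ht]
    field_simp
end

section
/- Let 0 < α < 1 and let f : ℝ → ℝ be continuously differentiable on [0,∞). Then for every t > 0, the Riemann–Liouville fractional integral of order α of the Caputo fractional derivative of order α of f recovers f up to its initial value: (1/Γ(α)) ∫_0^t (t−s)^{α−1} [ (1/Γ(1−α)) ∫_0^s f′(τ) (s−τ)^{−α} dτ ] ds = f(t) − f(0). -/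
/-!
Exchanging the order of integration over the triangle `0 < τ < s ≤ t` turns the left-hand side
into `∫₀ᵗ f'(τ) ∫_τ^t (t - s)^(α-1) (s - τ)^(-α) ds dτ`. After the substitution `s ↦ t - s`
the inner integral is the Beta integral `B(α, 1 - α) = Γ(α) Γ(1 - α)`, independent of `τ`, so
the normalising constants cancel and what remains is `∫₀ᵗ f' = f t - f 0`. Fubini applies
because `f'` is bounded on `[0, t]` and the kernel is integrable on the triangle: its integral
in `τ` is `(t - s)^(α-1) s^(1-α) / (1 - α)`.
-/

open MeasureTheory intervalIntegral Set

theorem Set.Iio_inter_Ioc_of_le {α : Type*} [LinearOrder α] {a b s : α} (h : s ≤ b) :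
    Iio s ∩ Ioc a b = Ioo a s := by
  ext x
  simp only [mem_inter_iff, mem_Iio, mem_Ioc, mem_Ioo]
  grind

theorem intervalIntegral_intervalIntegral_swap_triangle {E : Type*} [NormedAddCommGroup E]
    [NormedSpace ℝ E] {f : ℝ → ℝ → E} {a b : ℝ} (hab : a ≤ b)
    (hf : IntegrableOn (Function.uncurry f) ({p | p.2 < p.1} ∩ Ioc a b ×ˢ Ioc a b)) :
    ∫ s in a..b, ∫ τ in a..s, f s τ = ∫ τ in a..b, ∫ s in τ..b, f s τ := by
  -- extending `f` by zero off the triangle turns both sides into integrals over the square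
  set F : ℝ → ℝ → E := fun s τ => {p : ℝ × ℝ | p.2 < p.1}.indicator (Function.uncurry f) (s, τ)
  have hF : IntegrableOn (Function.uncurry F) (uIoc a b ×ˢ uIoc a b) := by
    rw [uIoc_of_le hab]
    exact (integrableOn_indicator_iff (measurableSet_lt measurable_snd measurable_fst)).2 hf
  have hinner : ∀ s ∈ Ioc a b, ∫ τ in a..s, f s τ = ∫ τ in a..b, F s τ := by
    intro s hs
    have hFs : F s = (Iio s).indicator (f s) := rfl
    rw [integral_of_le hs.1.le, integral_of_le hab, hFs,
      MeasureTheory.integral_indicator measurableSet_Iio,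
      Measure.restrict_restrict measurableSet_Iio, Iio_inter_Ioc_of_le hs.2,
      integral_Ioc_eq_integral_Ioo]
  have houter : ∀ τ ∈ Ioc a b, ∫ s in τ..b, f s τ = ∫ s in a..b, F s τ := by
    intro τ hτ
    have hFτ : (fun s => F s τ) = (Ioi τ).indicator (fun s => f s τ) := rfl
    rw [integral_of_le hτ.2, integral_of_le hab, hFτ,
      MeasureTheory.integral_indicator measurableSet_Ioi,
      Measure.restrict_restrict measurableSet_Ioi, inter_comm, Ioc_inter_Ioi,
      max_eq_right hτ.1.le]
  rw [integral_of_le hab, integral_of_le hab, setIntegral_congr_fun measurableSet_Ioc hinner,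
    setIntegral_congr_fun measurableSet_Ioc houter, ← integral_of_le hab, ← integral_of_le hab]
  exact intervalIntegral_intervalIntegral_swap hF

theorem integral_sub_rpow {b c s : ℝ} (hb : 0 < b) :
    ∫ τ in c..s, (s - τ) ^ (b - 1) = (s - c) ^ b / b := by
  rw [integral_comp_sub_left (fun x => x ^ (b - 1)), sub_self,
    integral_rpow (Or.inl (by linarith)), sub_add_cancel, Real.zero_rpow hb.ne', sub_zero]

theorem intervalIntegrable_sub_rpow {b s c d : ℝ} (hb : 0 < b) :
    IntervalIntegrable (fun τ => (s - τ) ^ (b - 1)) volume c d := by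
  simpa using (intervalIntegrable_rpow' (a := s - c) (b := s - d) (by linarith)).comp_sub_left s

theorem integrableOn_sub_rpow_mul_sub_rpow_triangle {a b c t : ℝ} (ha : 0 < a) (hb : 0 < b) :
    IntegrableOn (fun p : ℝ × ℝ => (t - p.1) ^ (a - 1) * (p.1 - p.2) ^ (b - 1))
      ({p | p.2 < p.1} ∩ Ioc c t ×ˢ Ioc c t) := by
  set μ := volume.restrict (Ioc c t)
  set G := {p : ℝ × ℝ | p.2 < p.1}.indicator
    (fun p : ℝ × ℝ => (t - p.1) ^ (a - 1) * (p.1 - p.2) ^ (b - 1))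
  have hslice : ∀ s τ, G (s, τ) =
      (Iio s).indicator (fun τ => (t - s) ^ (a - 1) * (s - τ) ^ (b - 1)) τ := fun _ _ => rfl
  have hrestrict : ∀ s ∈ Ioc c t, μ.restrict (Iio s) = volume.restrict (Ioc c s) := by
    intro s hs
    rw [Measure.restrict_restrict measurableSet_Iio, Iio_inter_Ioc_of_le hs.2,
      Measure.restrict_congr_set Ioo_ae_eq_Ioc]
  suffices Integrable G (μ.prod μ) by
    rwa [← integrableOn_indicator_iff (measurableSet_lt measurable_snd measurable_fst),
      IntegrableOn, Measure.volume_eq_prod, ← Measure.prod_restrict]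
  have hGmeas : AEStronglyMeasurable G (μ.prod μ) :=
    (Measurable.indicator (by fun_prop)
      (measurableSet_lt measurable_snd measurable_fst)).aestronglyMeasurable
  refine (integrable_prod_iff hGmeas).2 ⟨?_, ?_⟩
  · filter_upwards [ae_restrict_mem measurableSet_Ioc] with s hs
    simp_rw [hslice]
    rw [integrable_indicator_iff measurableSet_Iio, IntegrableOn, hrestrict s hs,
      ← IntegrableOn, ← intervalIntegrable_iff_integrableOn_Ioc_of_le hs.1.le]
    exact (intervalIntegrable_sub_rpow hb).const_mul _
  · have hnorm : ∀ s ∈ Ioc c t,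
        ∫ τ, ‖G (s, τ)‖ ∂μ = (t - s) ^ (a - 1) * ((s - c) ^ b / b) := by
      intro s hs
      have hnonneg : ∀ τ ∈ uIcc c s, ‖(t - s) ^ (a - 1) * (s - τ) ^ (b - 1)‖ =
          (t - s) ^ (a - 1) * (s - τ) ^ (b - 1) := by
        intro τ hτ
        rw [uIcc_of_le hs.1.le] at hτ
        exact Real.norm_of_nonneg (mul_nonneg (Real.rpow_nonneg (sub_nonneg.2 hs.2) _)
          (Real.rpow_nonneg (sub_nonneg.2 hτ.2) _))
      simp_rw [hslice, norm_indicator_eq_indicator_norm]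
      rw [MeasureTheory.integral_indicator measurableSet_Iio, hrestrict s hs,
        ← integral_of_le hs.1.le, integral_congr hnonneg, intervalIntegral.integral_const_mul,
        integral_sub_rpow hb]
    have hbound : IntegrableOn (fun s => (t - s) ^ (a - 1) * ((s - c) ^ b / b)) (Ioc c t) := by
      have hcont : Continuous fun s : ℝ => (s - c) ^ b / b :=
        ((continuous_id.sub continuous_const).rpow_const fun _ => Or.inr hb.le).div_const b
      have hkernel : IntegrableOn (fun s => (t - s) ^ (a - 1)) (Ioc c t) :=
        (intervalIntegrable_sub_rpow ha).def'.mono_set Ioc_subset_uIoc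
      exact hkernel.mul_continuousOn_of_subset hcont.continuousOn measurableSet_Ioc isCompact_uIcc
        (Ioc_subset_Icc_self.trans Icc_subset_uIcc)
    exact hbound.integrable.congr
      ((ae_restrict_mem measurableSet_Ioc).mono fun s hs => (hnorm s hs).symm)

theorem integrableOn_mul_sub_rpow_mul_sub_rpow_triangle {a b c t : ℝ} (ha : 0 < a) (hb : 0 < b)
    {g : ℝ → ℝ} (hg : ContinuousOn g (Icc c t)) :
    IntegrableOn (fun p : ℝ × ℝ => g p.2 * ((t - p.1) ^ (a - 1) * (p.1 - p.2) ^ (b - 1)))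
      ({p | p.2 < p.1} ∩ Ioc c t ×ˢ Ioc c t) :=
  (integrableOn_sub_rpow_mul_sub_rpow_triangle ha hb).continuousOn_mul_of_subset
    (hg.comp continuousOn_snd fun _ hp => hp.2) (isCompact_Icc.prod isCompact_Icc)
    ((measurableSet_lt measurable_snd measurable_fst).inter
      (measurableSet_Ioc.prod measurableSet_Ioc))
    fun _ hp => ⟨Ioc_subset_Icc_self hp.2.1, Ioc_subset_Icc_self hp.2.2⟩

theorem integral_rpow_mul_sub_rpow_s4 {a b c : ℝ} (ha : 0 < a) (hb : 0 < b) (hc : 0 < c) :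
    ∫ x in 0..c, x ^ (a - 1) * (c - x) ^ (b - 1) =
      c ^ (a + b - 1) * (Real.Gamma a * Real.Gamma b / Real.Gamma (a + b)) := by
  apply Complex.ofReal_injective
  have hcpow : ∀ x ∈ uIcc 0 c, ((x ^ (a - 1) * (c - x) ^ (b - 1) : ℝ) : ℂ) =
      (x : ℂ) ^ ((a : ℂ) - 1) * ((c : ℂ) - x) ^ ((b : ℂ) - 1) := by
    intro x hx
    rw [uIcc_of_le hc.le] at hx
    simp [Complex.ofReal_cpow hx.1, Complex.ofReal_cpow (sub_nonneg.2 hx.2)]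
  rw [← intervalIntegral.integral_ofReal, integral_congr hcpow, Complex.betaIntegral_scaled _ _ hc,
    Complex.betaIntegral_eq_Gamma_mul_div _ _ (by simpa) (by simpa)]
  simp [Complex.ofReal_cpow hc.le, ← Complex.ofReal_add, Complex.Gamma_ofReal]

theorem integral_sub_rpow_mul_sub_rpow {a b τ t : ℝ} (ha : 0 < a) (hb : 0 < b) (hτt : τ < t) :
    ∫ s in τ..t, (t - s) ^ (a - 1) * (s - τ) ^ (b - 1) =
      (t - τ) ^ (a + b - 1) * (Real.Gamma a * Real.Gamma b / Real.Gamma (a + b)) := by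
  have h := integral_comp_sub_left (fun x => x ^ (a - 1) * ((t - τ) - x) ^ (b - 1)) t
    (a := τ) (b := t)
  simp only [sub_sub_sub_cancel_left, sub_self] at h
  rw [h, integral_rpow_mul_sub_rpow_s4 ha hb (sub_pos.2 hτt)]

theorem integral_sub_rpow_sub_one_mul_sub_rpow_neg {α τ t : ℝ} (hα0 : 0 < α) (hα1 : α < 1)
    (hτt : τ < t) :
    ∫ s in τ..t, (t - s) ^ (α - 1) * (s - τ) ^ (-α) = Real.Gamma α * Real.Gamma (1 - α) := by
  have h := integral_sub_rpow_mul_sub_rpow hα0 (sub_pos.2 hα1) hτt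
  rwa [sub_sub_cancel_left, add_sub_cancel, sub_self, Real.rpow_zero, Real.Gamma_one, div_one,
    one_mul] at h

theorem integral_eq_sub_of_hasDerivWithinAt_Ici {f f' : ℝ → ℝ} {a b : ℝ} (hab : a ≤ b)
    (hderiv : ∀ x ∈ Ici a, HasDerivWithinAt f (f' x) (Ici a) x)
    (hcont : ContinuousOn f' (Ici a)) :
    ∫ x in a..b, f' x = f b - f a := by
  refine integral_eq_sub_of_hasDeriv_right_of_le hab
    (fun x hx => (hderiv x hx.1).continuousWithinAt.mono Icc_subset_Ici_self)
    (fun x hx => ((hderiv x hx.1.le).hasDerivAt (Ici_mem_nhds hx.1)).hasDerivWithinAt) ?_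
  exact (hcont.mono (uIcc_of_le hab ▸ Icc_subset_Ici_self)).intervalIntegrable

/-- For `0 < α < 1` and `f` continuously differentiable on `[0,∞)`, the
Riemann–Liouville fractional integral of order `α` of the Caputo fractional derivative of
order `α` of `f` recovers `f` up to its initial value:
`(1/Γ(α)) ∫_0^t (t-s)^(α-1) [(1/Γ(1-α)) ∫_0^s f'(τ)(s-τ)^(-α) dτ] ds = f(t) - f(0)`. -/
theorem riemannLiouville_integral_caputo_deriv (α : ℝ) (hα0 : 0 < α) (hα1 : α < 1)
    (f f' : ℝ → ℝ)
    (hderiv : ∀ x ∈ Set.Ici (0 : ℝ), HasDerivWithinAt f (f' x) (Set.Ici 0) x)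
    (hcont : ContinuousOn f' (Set.Ici 0)) (t : ℝ) (ht : 0 < t) :
    (1 / Real.Gamma α) *
        ∫ s in (0 : ℝ)..t, (t - s) ^ (α - 1) *
          ((1 / Real.Gamma (1 - α)) * ∫ τ in (0 : ℝ)..s, f' τ * (s - τ) ^ (-α)) =
      f t - f 0 := by
  have hint := integrableOn_mul_sub_rpow_mul_sub_rpow_triangle (c := 0) (t := t) hα0
    (sub_pos.2 hα1) (hcont.mono Icc_subset_Ici_self)
  rw [sub_sub_cancel_left] at hint
  calc (1 / Real.Gamma α) *
        ∫ s in (0 : ℝ)..t, (t - s) ^ (α - 1) *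
          ((1 / Real.Gamma (1 - α)) * ∫ τ in (0 : ℝ)..s, f' τ * (s - τ) ^ (-α))
      = (1 / Real.Gamma α) * ((1 / Real.Gamma (1 - α)) *
          ∫ s in (0 : ℝ)..t, ∫ τ in (0 : ℝ)..s, f' τ * ((t - s) ^ (α - 1) * (s - τ) ^ (-α))) := by
        simp only [← intervalIntegral.integral_const_mul]
        congr! 3 with s
        funext τ
        ring
    _ = (1 / Real.Gamma α) * ((1 / Real.Gamma (1 - α)) *
          ∫ τ in (0 : ℝ)..t, ∫ s in τ..t, f' τ * ((t - s) ^ (α - 1) * (s - τ) ^ (-α))) := by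
        rw [intervalIntegral_intervalIntegral_swap_triangle
          (f := fun s τ => f' τ * ((t - s) ^ (α - 1) * (s - τ) ^ (-α))) ht.le hint]
    _ = (1 / Real.Gamma α) * ((1 / Real.Gamma (1 - α)) *
          ∫ τ in (0 : ℝ)..t, f' τ * (Real.Gamma α * Real.Gamma (1 - α))) := by
        congr 2
        refine integral_congr_ae ((volume.ae_ne t).mono fun τ hτt hτ => ?_)
        rw [intervalIntegral.integral_const_mul, integral_sub_rpow_sub_one_mul_sub_rpow_neg hα0 hα1
          ((uIoc_of_le ht.le ▸ hτ).2.lt_of_ne hτt)]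
    _ = f t - f 0 := by
        rw [intervalIntegral.integral_mul_const,
          integral_eq_sub_of_hasDerivWithinAt_Ici ht.le hderiv hcont]
        field_simp [(Real.Gamma_pos_of_pos hα0).ne', (Real.Gamma_pos_of_pos (sub_pos.2 hα1)).ne']
end

section
/- Let 0 < α < 1, let s > 0, and let f : ℝ → ℝ be continuously differentiable on [0,∞) such that τ ↦ e^{−sτ} |f′(τ)| is integrable on (0,∞). Then t ↦ e^{−st} f(t) is integrable on (0,∞); denote F(s) = ∫_0^∞ e^{−st} f(t) dt. Moreover the Laplace transform of the Caputo fractional derivative of order α of f satisfies ∫_0^∞ e^{−s t} [ (1/Γ(1−α)) ∫_0^t f′(τ) (t−τ)^{−α} dτ ] dt = s^α F(s) − s^{α−1} f(0). -/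
/-!
Multiplying by `e^{-st}` splits over a causal convolution:
`e^{-st} ∫₀ᵗ φ(τ) k(t-τ) dτ = ∫₀ᵗ (e^{-sτ} φ(τ)) (e^{-s(t-τ)} k(t-τ)) dτ`, so Fubini turns the
Laplace transform of `∫₀ᵗ φ(τ) k(t-τ) dτ` into the product `L[φ](s) L[k](s)`. The Caputo
derivative is the convolution of `f'` with `u^{-α} / Γ(1-α)`, whose transform is `s^{α-1}`, and
`f - f 0` is the convolution of `f'` with `1`, which gives `L[f'](s) = s L[f](s) - f 0`.
-/

open MeasureTheory intervalIntegral Set Real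

noncomputable def laplace (f : ℝ → ℝ) (s : ℝ) : ℝ := ∫ t in Ioi 0, exp (-s * t) * f t

theorem laplace_const_mul (c : ℝ) (f : ℝ → ℝ) (s : ℝ) :
    laplace (fun t => c * f t) s = c * laplace f s := by
  simp only [laplace, mul_left_comm _ c, MeasureTheory.integral_const_mul]

section
variable {s β : ℝ}

theorem integrableOn_exp_neg_mul_mul_rpow_neg (hs : 0 < s) (hβ : β < 1) :
    IntegrableOn (fun u : ℝ => exp (-s * u) * u ^ (-β)) (Ioi 0) := by
  simpa only [rpow_one, mul_comm] using
    integrableOn_rpow_mul_exp_neg_mul_rpow (by linarith : -1 < -β) one_pos hs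

theorem laplace_rpow_neg (hs : 0 < s) (hβ : β < 1) :
    laplace (fun u => u ^ (-β)) s = s ^ (β - 1) * Gamma (1 - β) := by
  have h := integral_rpow_mul_exp_neg_mul_Ioi (sub_pos.2 hβ) hs
  rw [one_div, inv_rpow hs.le, ← rpow_neg hs.le, neg_sub] at h
  rw [laplace, ← h]
  congr 1 with u
  rw [sub_sub_cancel_left, neg_mul, mul_comm]

end

theorem laplace_one {s : ℝ} (hs : 0 < s) : laplace (fun _ => 1) s = s⁻¹ := by
  simpa [rpow_neg_one] using laplace_rpow_neg hs zero_lt_one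

theorem exp_neg_mul_mul_intervalIntegral (s t : ℝ) (φ k : ℝ → ℝ) :
    exp (-s * t) * ∫ τ in 0..t, φ τ * k (t - τ) =
      ∫ τ in 0..t, (exp (-s * τ) * φ τ) * (exp (-s * (t - τ)) * k (t - τ)) := by
  rw [← intervalIntegral.integral_const_mul]
  congr 1 with τ
  have : exp (-s * t) = exp (-s * τ) * exp (-s * (t - τ)) := by rw [← exp_add]; ring_nf
  rw [this]; ring

section
variable {s : ℝ} {φ k : ℝ → ℝ}
  (hφ : IntegrableOn (fun t => exp (-s * t) * φ t) (Ioi 0))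
  (hk : IntegrableOn (fun t => exp (-s * t) * k t) (Ioi 0))
include hφ hk

theorem integrableOn_exp_neg_mul_mul_convolution :
    IntegrableOn (fun t => exp (-s * t) * ∫ τ in 0..t, φ τ * k (t - τ)) (Ioi 0) := by
  refine (integrable_posConvolution hφ hk (ContinuousLinearMap.mul ℝ ℝ)).integrableOn.congr_fun
    (fun t ht => ?_) measurableSet_Ioi
  simp only [posConvolution, indicator_of_mem ht, ContinuousLinearMap.mul_apply']
  exact (exp_neg_mul_mul_intervalIntegral s t φ k).symm

theorem laplace_convolution :
    laplace (fun t => ∫ τ in 0..t, φ τ * k (t - τ)) s = laplace φ s * laplace k s := by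
  simpa only [laplace, exp_neg_mul_mul_intervalIntegral, ContinuousLinearMap.mul_apply']
    using integral_posConvolution hφ hk (ContinuousLinearMap.mul ℝ ℝ)

end

theorem intervalIntegral_eq_sub_of_hasDerivWithinAt_Ici {f f' : ℝ → ℝ}
    (hderiv : ∀ x ∈ Ici (0 : ℝ), HasDerivWithinAt f (f' x) (Ici 0) x)
    (hcont : ContinuousOn f' (Ici 0)) {t : ℝ} (ht : 0 ≤ t) :
    ∫ τ in 0..t, f' τ = f t - f 0 := by
  refine integral_eq_sub_of_hasDeriv_right_of_le ht
    (fun x hx => (hderiv x hx.1).continuousWithinAt.mono Icc_subset_Ici_self)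
    (fun x hx => ((hderiv x hx.1.le).hasDerivAt (Ici_mem_nhds hx.1)).hasDerivWithinAt) ?_
  exact (hcont.mono (by simp [uIcc_of_le ht, Icc_subset_Ici_self])).intervalIntegrable

theorem laplace_deriv {f f' : ℝ → ℝ} {s : ℝ} (hs : 0 < s)
    (hderiv : ∀ x ∈ Ici (0 : ℝ), HasDerivWithinAt f (f' x) (Ici 0) x)
    (hcont : ContinuousOn f' (Ici 0))
    (hf' : IntegrableOn (fun t => exp (-s * t) * f' t) (Ioi 0)) :
    IntegrableOn (fun t => exp (-s * t) * f t) (Ioi 0) ∧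
      laplace f' s = s * laplace f s - f 0 := by
  have hone : IntegrableOn (fun t => exp (-s * t) * 1) (Ioi 0) := by
    simpa using exp_neg_integrableOn_Ioi 0 hs
  have hconv := integrableOn_exp_neg_mul_mul_convolution hf' hone
  have hsplit : EqOn (fun t => exp (-s * t) * f t)
      (fun t => f 0 * (exp (-s * t) * 1) + exp (-s * t) * ∫ τ in 0..t, f' τ * 1) (Ioi 0) := by
    intro t ht
    simp only [mul_one, intervalIntegral_eq_sub_of_hasDerivWithinAt_Ici hderiv hcont (le_of_lt ht)]
    ring
  have hf : IntegrableOn (fun t => exp (-s * t) * f t) (Ioi 0) :=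
    IntegrableOn.congr_fun ((hone.const_mul (f 0)).add hconv) hsplit.symm measurableSet_Ioi
  refine ⟨hf, ?_⟩
  have hlap : laplace f s = f 0 * s⁻¹ + laplace f' s * s⁻¹ := by
    rw [laplace, setIntegral_congr_fun measurableSet_Ioi hsplit,
      integral_add (hone.const_mul _) hconv, MeasureTheory.integral_const_mul,
      ← laplace_one hs, ← laplace_convolution hf' hone]
    rfl
  rw [hlap]
  field_simp
  ring

theorem laplace_transform_caputo_general (α s : ℝ) (hα1 : α < 1) (hs : 0 < s)
    (f f' : ℝ → ℝ)
    (hderiv : ∀ x ∈ Set.Ici (0 : ℝ), HasDerivWithinAt f (f' x) (Set.Ici 0) x)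
    (hcont : ContinuousOn f' (Set.Ici 0))
    (hint : IntegrableOn (fun τ : ℝ => Real.exp (-s * τ) * |f' τ|) (Set.Ioi 0)) :
    IntegrableOn (fun t : ℝ => Real.exp (-s * t) * f t) (Set.Ioi 0) ∧
    ∫ t in Set.Ioi (0 : ℝ),
        Real.exp (-s * t) *
          ((1 / Real.Gamma (1 - α)) * ∫ τ in (0 : ℝ)..t, f' τ * (t - τ) ^ (-α)) =
      s ^ α * (∫ t in Set.Ioi (0 : ℝ), Real.exp (-s * t) * f t) - s ^ (α - 1) * f 0 := by
  have hf' : IntegrableOn (fun t => exp (-s * t) * f' t) (Ioi 0) := by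
    refine (integrable_norm_iff ?_).1 ?_
    · exact ((continuous_exp.comp (continuous_const.mul continuous_id)).continuousOn.mul
        (hcont.mono Ioi_subset_Ici_self)).aestronglyMeasurable measurableSet_Ioi
    · simp only [norm_mul, norm_eq_abs, abs_exp]
      exact hint
  obtain ⟨hf, hlap⟩ := laplace_deriv hs hderiv hcont hf'
  refine ⟨hf, ?_⟩
  have hΓ : Gamma (1 - α) ≠ 0 := (Gamma_pos_of_pos (sub_pos.2 hα1)).ne'
  have hsα : s ^ α = s ^ (α - 1) * s := by rw [← rpow_add_one hs.ne', sub_add_cancel]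
  change laplace (fun t => 1 / Gamma (1 - α) * ∫ τ in 0..t, f' τ * (t - τ) ^ (-α)) s = _
  rw [laplace_const_mul, laplace_convolution hf' (integrableOn_exp_neg_mul_mul_rpow_neg hs hα1),
    laplace_rpow_neg hs hα1, hlap, ← laplace, hsα]
  field_simp

/-- Laplace transform of the Caputo fractional derivative: for `0 < α < 1`, `s > 0` and
`f` continuously differentiable on `[0,∞)` with `τ ↦ e^(-sτ)|f'(τ)|` integrable on
`(0,∞)`, the function `t ↦ e^(-st) f(t)` is integrable on `(0,∞)` and, with
`F(s) = ∫_0^∞ e^(-st) f(t) dt`,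
`∫_0^∞ e^(-st) [(1/Γ(1-α)) ∫_0^t f'(τ)(t-τ)^(-α) dτ] dt = s^α F(s) - s^(α-1) f(0)`. -/
theorem laplace_transform_caputo (α s : ℝ) (hα0 : 0 < α) (hα1 : α < 1) (hs : 0 < s)
    (f f' : ℝ → ℝ)
    (hderiv : ∀ x ∈ Set.Ici (0 : ℝ), HasDerivWithinAt f (f' x) (Set.Ici 0) x)
    (hcont : ContinuousOn f' (Set.Ici 0))
    (hint : IntegrableOn (fun τ : ℝ => Real.exp (-s * τ) * |f' τ|) (Set.Ioi 0)) :
    IntegrableOn (fun t : ℝ => Real.exp (-s * t) * f t) (Set.Ioi 0) ∧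
    ∫ t in Set.Ioi (0 : ℝ),
        Real.exp (-s * t) *
          ((1 / Real.Gamma (1 - α)) * ∫ τ in (0 : ℝ)..t, f' τ * (t - τ) ^ (-α)) =
      s ^ α * (∫ t in Set.Ioi (0 : ℝ), Real.exp (-s * t) * f t) - s ^ (α - 1) * f 0 :=
  laplace_transform_caputo_general α s hα1 hs f f' hderiv hcont hint
end

section
/- Fix s > 0 and C > 0. For each R > 0 let z*(R) = (R + √(R² + 4R/(sC)))/2 be the unique positive fixed point of the domino-ladder impedance map F(z) = R + 1/(sC + 1/z). Then z*(R) / ( √(R/C) · s^{−1/2} ) → 1 as R → 0⁺. That is, in the continuum limit of vanishing section resistance, the infinite RC domino ladder has impedance asymptotic to √(R/C) · s^{−1/2}, i.e., it is a half-order integrator. -/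
open Filter Topology

/-
Writing `Y = sC`, the fixed point factors as
`z*(R) = √(R/Y) · (√(RY) + √(RY + 4))/2`, and `√(R/C) · s^(-1/2) = √(R/Y)`.
So the ratio is `g(RY)` for the continuous function `g x = (√x + √(x + 4))/2`,
and `g 0 = 1`.
-/

lemma Real.sqrt_div_mul_rpow_neg_half (R C : ℝ) {s : ℝ} (hs : 0 ≤ s) :
    Real.sqrt (R / C) * s ^ (-(1 / 2 : ℝ)) = Real.sqrt (R / (s * C)) := by
  rw [Real.rpow_neg hs, ← Real.sqrt_eq_rpow, mul_comm s, ← div_div,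
    Real.sqrt_div' _ hs, div_eq_mul_inv (Real.sqrt (R / C))]

lemma domino_fixedPoint_eq_sqrt_div_mul {R Y : ℝ} (hR : 0 ≤ R) (hY : 0 < Y) :
    (R + Real.sqrt (R ^ 2 + 4 * R / Y)) / 2 =
      Real.sqrt (R / Y) * ((Real.sqrt (R * Y) + Real.sqrt (R * Y + 4)) / 2) := by
  have hRY : 0 ≤ R / Y := div_nonneg hR hY.le
  have hfirst : Real.sqrt (R / Y) * Real.sqrt (R * Y) = R := by
    rw [← Real.sqrt_mul hRY, show R / Y * (R * Y) = R ^ 2 by field_simp,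
      Real.sqrt_sq hR]
  have hsecond : Real.sqrt (R / Y) * Real.sqrt (R * Y + 4) =
      Real.sqrt (R ^ 2 + 4 * R / Y) := by
    rw [← Real.sqrt_mul hRY]
    congr 1
    field_simp
  rw [mul_div_assoc', mul_add, hfirst, hsecond]

lemma tendsto_sqrt_add_sqrt_add_four_div_two :
    Tendsto (fun x : ℝ => (Real.sqrt x + Real.sqrt (x + 4)) / 2) (𝓝 0) (𝓝 1) := by
  have hvalue : (Real.sqrt 0 + Real.sqrt (0 + 4)) / 2 = (1 : ℝ) := by
    rw [Real.sqrt_zero, zero_add, zero_add, show (4 : ℝ) = 2 ^ 2 by norm_num,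
      Real.sqrt_sq zero_le_two]
    norm_num
  have hcont : Continuous fun x : ℝ => (Real.sqrt x + Real.sqrt (x + 4)) / 2 := by
    fun_prop
  simpa only [hvalue] using hcont.tendsto 0

/-- Continuum limit of the infinite RC domino ladder: for fixed `s > 0`, `C > 0`, the
unique positive fixed point `z*(R) = (R + √(R² + 4R/(sC)))/2` of the impedance map
`F(z) = R + 1/(sC + 1/z)` satisfies `z*(R) / (√(R/C) s^(-1/2)) → 1` as `R → 0⁺`:
the ladder is asymptotically a half-order integrator. -/
theorem domino_ladder_half_order_limit (s C : ℝ) (hs : 0 < s) (hC : 0 < C) :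
    Tendsto
      (fun R : ℝ =>
        ((R + Real.sqrt (R ^ 2 + 4 * R / (s * C))) / 2) /
          (Real.sqrt (R / C) * s ^ (-(1 / 2 : ℝ))))
      (nhdsWithin 0 (Set.Ioi 0)) (nhds 1) := by
  have hY : 0 < s * C := mul_pos hs hC
  have hscaled : Tendsto (fun R : ℝ => R * (s * C)) (𝓝[>] 0) (𝓝 0) := by
    simpa only [zero_mul] using
      ((continuous_mul_const (s * C)).tendsto 0).mono_left nhdsWithin_le_nhds
  refine (tendsto_sqrt_add_sqrt_add_four_div_two.comp hscaled).congr' ?_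
  filter_upwards [self_mem_nhdsWithin] with R (hR : 0 < R)
  have hfactor : Real.sqrt (R / (s * C)) ≠ 0 := (Real.sqrt_pos.2 (div_pos hR hY)).ne'
  rw [Real.sqrt_div_mul_rpow_neg_half R C hs.le,
    domino_fixedPoint_eq_sqrt_div_mul hR.le hY, mul_div_cancel_left₀ _ hfactor]
  rfl
end

section
/- Fix s > 0 and K > 0. For each R > 0 let z*(R) = (R + √(R² + 4RK s^{−1/2}))/2 be the unique positive fixed point of the nested-ladder impedance map F(z) = R + 1/(s^{1/2}/K + 1/z), obtained from the domino ladder by replacing each shunt capacitor with a half-order element of impedance K · s^{−1/2}. Then z*(R) / ( √(RK) · s^{−1/4} ) → 1 as R → 0⁺. That is, in the continuum limit the nested ladder has impedance asymptotic to √(RK) · s^{−1/4}, i.e., it is a quarter-order integrator. -/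
open Filter Topology

/-- Input impedance `(R + √(R² + 4RL))/2` of the infinite ladder with series resistance `R` and
shunt impedance `L = 1/Y`. -/
noncomputable def ladderImpedance (R L : ℝ) : ℝ :=
  (R + Real.sqrt (R ^ 2 + 4 * R * L)) / 2

/-- Factoring `√R` out of numerator and denominator removes the singularity at `R = 0`. -/
lemma ladderImpedance_div_sqrt_mul {R L : ℝ} (hR : 0 < R) (hL : 0 < L) :
    ladderImpedance R L / Real.sqrt (R * L) =
      (Real.sqrt R + Real.sqrt (R + 4 * L)) / (2 * Real.sqrt L) := by
  have hsqrtR : 0 < Real.sqrt R := Real.sqrt_pos.mpr hR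
  have hsqrtL : 0 < Real.sqrt L := Real.sqrt_pos.mpr hL
  have h_disc : Real.sqrt (R ^ 2 + 4 * R * L) = Real.sqrt R * Real.sqrt (R + 4 * L) := by
    rw [← Real.sqrt_mul hR.le]
    ring_nf
  have hR_sq : R = Real.sqrt R * Real.sqrt R := (Real.mul_self_sqrt hR.le).symm
  rw [ladderImpedance, h_disc, Real.sqrt_mul hR.le, hR_sq]
  field_simp
  rw [Real.sqrt_sq hsqrtR.le]
  ring

theorem tendsto_ladderImpedance_div_sqrt_mul {L : ℝ} (hL : 0 < L) :
    Tendsto (fun R => ladderImpedance R L / Real.sqrt (R * L)) (𝓝[>] 0) (𝓝 1) := by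
  set g : ℝ → ℝ := fun R => (Real.sqrt R + Real.sqrt (R + 4 * L)) / (2 * Real.sqrt L)
  have hsqrtL : 0 < Real.sqrt L := Real.sqrt_pos.mpr hL
  have hg_cont : Continuous g := by fun_prop
  have hg_zero : g 0 = 1 := by
    have h_four : Real.sqrt (4 * L) = 2 * Real.sqrt L := by
      rw [Real.sqrt_mul (by norm_num), show (4 : ℝ) = 2 ^ 2 by norm_num, Real.sqrt_sq (by norm_num)]
    simp only [g, Real.sqrt_zero, zero_add, h_four]
    exact div_self (by positivity)
  have hg_lim : Tendsto g (𝓝[>] 0) (𝓝 1) :=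
    hg_zero ▸ hg_cont.continuousAt.continuousWithinAt.tendsto
  refine hg_lim.congr' ?_
  filter_upwards [self_mem_nhdsWithin] with R hR
  exact (ladderImpedance_div_sqrt_mul hR hL).symm

/-- Continuum limit of the nested ladder: for fixed `s > 0`, `K > 0`, the unique positive
fixed point `z*(R) = (R + √(R² + 4RK s^(-1/2)))/2` of the nested-ladder impedance map
`F(z) = R + 1/(s^(1/2)/K + 1/z)` satisfies `z*(R)/(√(RK) s^(-1/4)) → 1` as `R → 0⁺`:
the nested ladder is asymptotically a quarter-order integrator. -/
theorem nested_ladder_quarter_order_limit (s K : ℝ) (hs : 0 < s) (hK : 0 < K) :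
    Tendsto
      (fun R : ℝ =>
        ((R + Real.sqrt (R ^ 2 + 4 * R * K * s ^ (-(1 / 2 : ℝ)))) / 2) /
          (Real.sqrt (R * K) * s ^ (-(1 / 4 : ℝ))))
      (nhdsWithin 0 (Set.Ioi 0)) (nhds 1) := by
  -- The half-order shunt has impedance `L = K s^(-1/2)`, and `√(RK) s^(-1/4) = √(RL)`.
  have h_quarter : s ^ (-(1 / 4 : ℝ)) = Real.sqrt (s ^ (-(1 / 2 : ℝ))) := by
    rw [Real.sqrt_eq_rpow, ← Real.rpow_mul hs.le]
    norm_num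
  have hL : 0 < K * s ^ (-(1 / 2 : ℝ)) := mul_pos hK (Real.rpow_pos_of_pos hs _)
  convert tendsto_ladderImpedance_div_sqrt_mul hL using 2 with R
  rw [ladderImpedance, h_quarter, ← Real.sqrt_mul' _ (Real.rpow_nonneg hs.le _), mul_assoc R,
    mul_assoc (4 * R)]
end
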